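/- Let I ⊆ [n] and let X ∈ O_n^T satisfy Tr_I X = 0, where Tr_I denotes the partial trace over all qudits in I. Then ‖X‖_{W1} ≤ |I| · ((d² − 1)/d²) · ‖X‖₁. In particular, for any quantum states ρ, σ ∈ S_n whose marginals on the complement of I coincide (i.e., Tr_I ρ = Tr_I σ), one has ‖ρ − σ‖_{W1} ≤ |I| · ((d² − 1)/d²) · ‖ρ − σ‖₁. -/

import Mathlib

open scoped BigOperators
open scoped Classical
open scoped ComplexOrder

noncomputable section

namespace QW1

/-- Configurations of `n` qudits of local dimension `d`:
the index set of the canonical basis of `(ℂ^d)^{⊗ n}`. -/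
abbrev Cfg (d n : ℕ) : Type := Fin n → Fin d

/-- Linear operators on the Hilbert space of `n` qudits, represented as matrices
in the canonical basis. -/
abbrev Mat (d n : ℕ) : Type := Matrix (Cfg d n) (Cfg d n) ℂ

/-- The trace norm `‖A‖₁ = Tr √(Aᴴ A)`. -/
noncomputable def traceNorm {ι : Type} [Fintype ι] [DecidableEq ι] (A : Matrix ι ι ℂ) : ℝ :=
  (((Matrix.posSemidef_conjTranspose_mul_self A).1.eigenvectorUnitary : Matrix ι ι ℂ) *
    Matrix.diagonal (((↑) : ℝ → ℂ) ∘ (Real.sqrt ·) ∘ (Matrix.posSemidef_conjTranspose_mul_self A).1.eigenvalues) *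
    (star (Matrix.posSemidef_conjTranspose_mul_self A).1.eigenvectorUnitary : Matrix ι ι ℂ)).trace.re

/-- The operator norm `‖A‖_∞`. -/
noncomputable def opNorm {ι : Type} [Fintype ι] [DecidableEq ι] (A : Matrix ι ι ℂ) : ℝ :=
  ‖Matrix.toEuclideanCLM (𝕜 := ℂ) A‖

/-- Quantum states: positive semidefinite operators with unit trace. -/
def IsState {ι : Type} [Fintype ι] (ρ : Matrix ι ι ℂ) : Prop :=
  ρ.PosSemidef ∧ ρ.trace = 1

/-- Insert the value `s` at position `i` into a configuration `a` of the remaining qudits. -/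
def ins {d n : ℕ} (i : Fin n) (a : {j : Fin n // j ≠ i} → Fin d) (s : Fin d) : Cfg d n :=
  fun j => if h : j = i then s else a ⟨j, h⟩

/-- The partial trace over the `i`-th qudit. -/
noncomputable def ptrace {d n : ℕ} (i : Fin n) (X : Mat d n) :
    Matrix ({j : Fin n // j ≠ i} → Fin d) ({j : Fin n // j ≠ i} → Fin d) ℂ :=
  fun a b => ∑ s : Fin d, X (ins i a s) (ins i b s)

/-- The marginal of `ρ` on the `i`-th qudit (partial trace over all the other qudits). -/
noncomputable def marginal {d n : ℕ} (i : Fin n) (ρ : Mat d n) :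
    Matrix (Fin d) (Fin d) ℂ :=
  fun s t => ∑ a : ({j : Fin n // j ≠ i} → Fin d), ρ (ins i a s) (ins i a t)

/-- Combine a configuration `s` of the qudits in `I` with a configuration `a` of the rest. -/
def insSet {d n : ℕ} (I : Finset (Fin n)) (a : {j : Fin n // j ∉ I} → Fin d)
    (s : {j : Fin n // j ∈ I} → Fin d) : Cfg d n :=
  fun j => if h : j ∈ I then s ⟨j, h⟩ else a ⟨j, h⟩

/-- The partial trace over the qudits in `I`. -/
noncomputable def ptraceSet {d n : ℕ} (I : Finset (Fin n)) (X : Mat d n) :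
    Matrix ({j : Fin n // j ∉ I} → Fin d) ({j : Fin n // j ∉ I} → Fin d) ℂ :=
  fun a b => ∑ s : ({j : Fin n // j ∈ I} → Fin d), X (insSet I a s) (insSet I b s)

/-- The set of values `(1/2) ∑ i ‖X⁽ⁱ⁾‖₁` over all decompositions `X = ∑ i X⁽ⁱ⁾` with
`X⁽ⁱ⁾` self-adjoint and `Tr_i X⁽ⁱ⁾ = 0`. -/
def W1Set {d n : ℕ} (X : Mat d n) : Set ℝ :=
  { r | ∃ Y : Fin n → Mat d n, (∀ i, (Y i).IsHermitian) ∧ (∀ i, ptrace i (Y i) = 0) ∧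
      X = ∑ i, Y i ∧ r = (1 / 2) * ∑ i, traceNorm (Y i) }

/-- The quantum `W₁` norm. -/
noncomputable def W1 {d n : ℕ} (X : Mat d n) : ℝ := sInf (W1Set X)

/-- The quantum Lipschitz constant: the dual norm of the quantum `W₁` norm. -/
noncomputable def lipschitz {d n : ℕ} (H : Mat d n) : ℝ :=
  sSup { r | ∃ X : Mat d n, X.IsHermitian ∧ X.trace = 0 ∧ W1 X ≤ 1 ∧
    r = ((H * X).trace).re }

/-- Extension `Φ ⊗ id_R` of a map on matrices. -/
def extendMap {A B R : Type} [Fintype A] [Fintype B] [Fintype R]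
    (Φ : Matrix A A ℂ → Matrix B B ℂ) (M : Matrix (A × R) (A × R) ℂ) :
    Matrix (B × R) (B × R) ℂ :=
  fun p q => Φ (fun a a' => M (a, p.2) (a', q.2)) p.1 q.1

/-- Quantum channels: completely positive trace-preserving linear maps. -/
def IsCPTP {A B : Type} [Fintype A] [Fintype B]
    (Φ : Matrix A A ℂ →ₗ[ℂ] Matrix B B ℂ) : Prop :=
  (∀ (k : ℕ) (M : Matrix (A × Fin k) (A × Fin k) ℂ), M.PosSemidef →
    (extendMap (fun N => Φ N) M).PosSemidef) ∧
  ∀ M, (Φ M).trace = M.trace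

/-- Action `φ_i ⊗ id` of a single-qudit map `φ` on the `i`-th qudit of `n` qudits. -/
def applyAt {d n : ℕ} (i : Fin n) (φ : Matrix (Fin d) (Fin d) ℂ → Matrix (Fin d) (Fin d) ℂ)
    (X : Mat d n) : Mat d n :=
  fun a b => φ (fun s t => X (Function.update a i s) (Function.update b i t)) (a i) (b i)

/-- Action `φ_I ⊗ id` of a map `φ` on the qudits in `I`. -/
def applyOn {d n : ℕ} (I : Finset (Fin n))
    (φ : Matrix ({j : Fin n // j ∈ I} → Fin d) ({j : Fin n // j ∈ I} → Fin d) ℂ →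
         Matrix ({j : Fin n // j ∈ I} → Fin d) ({j : Fin n // j ∈ I} → Fin d) ℂ)
    (X : Mat d n) : Mat d n :=
  fun a b =>
    φ (fun s t => X (insSet I (fun j => a j) s) (insSet I (fun j => b j) t))
      (fun j => a j) (fun j => b j)

/-- The operator obtained from `X` by permuting the tensor factors according to `π`. -/
def permuteMat {d n : ℕ} (π : Equiv.Perm (Fin n)) (X : Mat d n) : Mat d n :=
  fun a b => X (a ∘ π) (b ∘ π)

/-- Tensor product of an operator on the first `m` qudits with one on the last `n` qudits. -/
def tensorMN {d m n : ℕ} (A : Mat d m) (B : Mat d n) : Mat d (m + n) :=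
  fun a b =>
    A (fun i => a (Fin.castAdd n i)) (fun i => b (Fin.castAdd n i)) *
    B (fun j => a (Fin.natAdd m j)) (fun j => b (Fin.natAdd m j))

/-- Partial trace of an operator on `m + n` qudits over the last `n` qudits. -/
noncomputable def ptraceLast {d m n : ℕ} (X : Mat d (m + n)) : Mat d m :=
  fun a b => ∑ k : Cfg d n, X (Fin.append a k) (Fin.append b k)

/-- Partial trace of an operator on `m + n` qudits over the first `m` qudits. -/
noncomputable def ptraceFirst {d m n : ℕ} (X : Mat d (m + n)) : Mat d n :=
  fun a b => ∑ k : Cfg d m, X (Fin.append k a) (Fin.append k b)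

/-- `n`-fold tensor product `σ₁ ⊗ ⋯ ⊗ σₙ` of single-qudit operators. -/
def tensorAll {d n : ℕ} (σs : Fin n → Matrix (Fin d) (Fin d) ℂ) : Mat d n :=
  fun a b => ∏ i, σs i (a i) (b i)

/-- `I_d^{(i)} ⊗ K`: the identity on the `i`-th qudit tensored with an operator `K`
on the remaining qudits. -/
def idTensorAt {d n : ℕ} (i : Fin n)
    (K : Matrix ({j : Fin n // j ≠ i} → Fin d) ({j : Fin n // j ≠ i} → Fin d) ℂ) :
    Mat d n :=
  fun a b => if a i = b i then K (fun j => a j) (fun j => b j) else 0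

/-- `K ⊗ identity`: an operator acting only on the qudits in `I`. -/
def embedOn {d n : ℕ} (I : Finset (Fin n))
    (K : Matrix ({j : Fin n // j ∈ I} → Fin d) ({j : Fin n // j ∈ I} → Fin d) ℂ) :
    Mat d n :=
  fun a b => if (∀ j, j ∉ I → a j = b j) then K (fun j => a j) (fun j => b j) else 0

/-- The `n`-th tensor power `φ^{⊗n}` of a single-qudit linear map `φ`. -/
noncomputable def tensorPowMap {d n : ℕ}
    (φ : Matrix (Fin d) (Fin d) ℂ → Matrix (Fin d) (Fin d) ℂ) (X : Mat d n) : Mat d n :=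
  fun a b => ∑ s : Cfg d n, ∑ t : Cfg d n,
    X s t * ∏ j, φ (Matrix.single (s j) (t j) 1) (a j) (b j)

/-- The `1 → 1` norm of a map on single-qudit operators. -/
noncomputable def norm1to1 {d : ℕ}
    (F : Matrix (Fin d) (Fin d) ℂ → Matrix (Fin d) (Fin d) ℂ) : ℝ :=
  sSup { r | ∃ ρ : Matrix (Fin d) (Fin d) ℂ, IsState ρ ∧ r = traceNorm (F ρ) }

/-- The diamond norm of a map on single-qudit operators. -/
noncomputable def diamondNorm {d : ℕ}
    (F : Matrix (Fin d) (Fin d) ℂ → Matrix (Fin d) (Fin d) ℂ) : ℝ :=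
  sSup { r | ∃ ρ : Matrix (Fin d × Fin d) (Fin d × Fin d) ℂ, IsState ρ ∧
    r = traceNorm (extendMap F ρ) }

/-- The contraction coefficient (`W₁ → W₁` norm) of a map on `n`-qudit operators. -/
noncomputable def W1toW1 {d n : ℕ} (Φ : Mat d n → Mat d n) : ℝ :=
  sSup { r | ∃ X : Mat d n, X.IsHermitian ∧ X.trace = 0 ∧ W1 X ≤ 1 ∧ r = W1 (Φ X) }

/-- The von Neumann entropy `S(ρ) = -Tr[ρ ln ρ]` (natural logarithm). -/
noncomputable def vnEntropy {ι : Type} [Fintype ι] [DecidableEq ι] (ρ : Matrix ι ι ℂ) : ℝ :=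
  if h : ρ.IsHermitian then -∑ i, h.eigenvalues i * Real.log (h.eigenvalues i) else 0

/-- The logarithm of a self-adjoint matrix, via the spectral decomposition. -/
noncomputable def matLog {ι : Type} [Fintype ι] [DecidableEq ι] (ρ : Matrix ι ι ℂ) :
    Matrix ι ι ℂ :=
  if h : ρ.IsHermitian then
    (h.eigenvectorUnitary : Matrix ι ι ℂ) *
      Matrix.diagonal (fun i => (Real.log (h.eigenvalues i) : ℂ)) *
      (star (h.eigenvectorUnitary : Matrix ι ι ℂ))
  else 0

/-- The quantum relative entropy `S(ρ‖σ) = Tr[ρ (ln ρ - ln σ)]`. -/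
noncomputable def relEntropy {ι : Type} [Fintype ι] [DecidableEq ι]
    (ρ σ : Matrix ι ι ℂ) : ℝ :=
  ((ρ * (matLog ρ - matLog σ)).trace).re

/-- The Hamming distance between two configurations. -/
def hamming {d n : ℕ} (x y : Cfg d n) : ℕ :=
  (Finset.univ.filter (fun i => x i ≠ y i)).card

/-- Probability distributions on a finite set. -/
def IsProb {α : Type} [Fintype α] (p : α → ℝ) : Prop :=
  (∀ x, 0 ≤ p x) ∧ ∑ x, p x = 1

/-- Couplings of two probability distributions. -/
def IsCoupling {α : Type} [Fintype α] (π : α × α → ℝ) (p q : α → ℝ) : Prop :=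
  IsProb π ∧ (∀ x, ∑ y, π (x, y) = p x) ∧ (∀ y, ∑ x, π (x, y) = q y)

/-- The classical Wasserstein distance of order 1 with respect to the Hamming distance. -/
noncomputable def classicalW1 {d n : ℕ} (p q : Cfg d n → ℝ) : ℝ :=
  sInf { c | ∃ π : Cfg d n × Cfg d n → ℝ, IsCoupling π p q ∧
    c = ∑ x : Cfg d n, ∑ y : Cfg d n, (hamming x y : ℝ) * π (x, y) }

/-- The Lipschitz constant of a function on `[d]^n` with respect to the Hamming distance. -/
noncomputable def classicalLip {d n : ℕ} (f : Cfg d n → ℝ) : ℝ :=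
  sSup { r | ∃ x y : Cfg d n, x ≠ y ∧ r = |f x - f y| / (hamming x y : ℝ) }

/-! Let `Qᵢ X = (1/d) I ⊗ Trᵢ X` be the completely depolarizing channel on qudit `i`. It is the
average of the `d²` conjugations by the Weyl operators on that qudit, one of which is the identity;
hence `Qᵢ` contracts the trace norm and `‖X - Qᵢ X‖₁ ≤ 2 (d² - 1)/d² ‖X‖₁`, while
`Trᵢ (X - Qᵢ X) = 0`. Enumerate `I = {i₁ < ⋯ < iₖ}` and put `P₀ = id`, `Pₘ = Q_{iₘ} Pₘ₋₁`.
Since `Tr_I X = 0` we have `Pₖ X = 0`, so `X = ∑ₘ (Pₘ₋₁ X - Q_{iₘ} Pₘ₋₁ X)` is a decomposition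
admissible for `‖X‖_{W₁}` with `k` terms, each of trace norm at most `2 (d² - 1)/d² ‖X‖₁`. -/

open Matrix

section TraceNorm

variable {ι : Type} [Fintype ι] [DecidableEq ι]

/-- `|A| = √(Aᴴ A)`, written exactly as inside `traceNorm`. -/
def matAbs (A : Matrix ι ι ℂ) : Matrix ι ι ℂ :=
  ((posSemidef_conjTranspose_mul_self A).1.eigenvectorUnitary : Matrix ι ι ℂ) *
    diagonal (((↑) : ℝ → ℂ) ∘ (Real.sqrt ·) ∘ (posSemidef_conjTranspose_mul_self A).1.eigenvalues) *
    (star (posSemidef_conjTranspose_mul_self A).1.eigenvectorUnitary : Matrix ι ι ℂ)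

lemma traceNorm_eq_re_trace_matAbs (A : Matrix ι ι ℂ) : traceNorm A = (matAbs A).trace.re :=
  rfl

lemma matAbs_eq_cfc (A : Matrix ι ι ℂ) : matAbs A = cfc Real.sqrt (Aᴴ * A) := by
  rw [(posSemidef_conjTranspose_mul_self A).1.cfc_eq, IsHermitian.cfc,
    Unitary.conjStarAlgAut_apply]
  rfl

lemma posSemidef_matAbs (A : Matrix ι ι ℂ) : (matAbs A).PosSemidef := by
  have hD : (diagonal (((↑) : ℝ → ℂ) ∘ (Real.sqrt ·) ∘
      (posSemidef_conjTranspose_mul_self A).1.eigenvalues)).PosSemidef :=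
    posSemidef_diagonal_iff.mpr fun i => Complex.zero_le_real.mpr (Real.sqrt_nonneg _)
  simpa [star_eq_conjTranspose, matAbs] using hD.mul_mul_conjTranspose_same
    ((posSemidef_conjTranspose_mul_self A).1.eigenvectorUnitary : Matrix ι ι ℂ)

lemma matAbs_mul_self (A : Matrix ι ι ℂ) : matAbs A * matAbs A = Aᴴ * A := by
  have hA := posSemidef_conjTranspose_mul_self A
  have : IsSelfAdjoint (Aᴴ * A) := hA.1
  rw [matAbs_eq_cfc, ← cfc_mul Real.sqrt Real.sqrt (Aᴴ * A)]
  conv_rhs => rw [← cfc_id' ℝ (Aᴴ * A)]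
  refine cfc_congr fun x hx => ?_
  rw [hA.1.spectrum_real_eq_range_eigenvalues] at hx
  obtain ⟨i, rfl⟩ := hx
  exact Real.mul_self_sqrt (hA.eigenvalues_nonneg i)

lemma eq_matAbs_of_mul_self {A S : Matrix ι ι ℂ} (hS : S.PosSemidef) (h : S * S = Aᴴ * A) :
    S = matAbs A := by
  have : IsSelfAdjoint S := hS.1
  rw [matAbs_eq_cfc, ← h, ← sq, ← cfc_comp_pow Real.sqrt 2 S, eq_comm]
  conv_rhs => rw [← cfc_id' ℝ S]
  refine cfc_congr fun x hx => ?_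
  rw [hS.1.spectrum_real_eq_range_eigenvalues] at hx
  obtain ⟨i, rfl⟩ := hx
  exact Real.sqrt_sq (hS.eigenvalues_nonneg i)

lemma traceNorm_eq_of_mul_self {A S : Matrix ι ι ℂ} (hS : S.PosSemidef) (h : S * S = Aᴴ * A) :
    traceNorm A = S.trace.re := by
  rw [traceNorm_eq_re_trace_matAbs, eq_matAbs_of_mul_self hS h]

lemma traceNorm_nonneg (A : Matrix ι ι ℂ) : 0 ≤ traceNorm A :=
  Complex.nonneg_iff.mp (posSemidef_matAbs A).trace_nonneg |>.1

lemma traceNorm_zero : traceNorm (0 : Matrix ι ι ℂ) = 0 := by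
  simp [traceNorm_eq_of_mul_self PosSemidef.zero (A := (0 : Matrix ι ι ℂ)) (by simp)]

lemma traceNorm_neg (A : Matrix ι ι ℂ) : traceNorm (-A) = traceNorm A :=
  traceNorm_eq_of_mul_self (S := matAbs A) (posSemidef_matAbs A) (by simp [matAbs_mul_self])

lemma traceNorm_unitary_conj (A : Matrix ι ι ℂ) {U : Matrix ι ι ℂ}
    (hU : U ∈ unitaryGroup ι ℂ) : traceNorm (U * A * star U) = traceNorm A := by
  have hUU : star U * U = 1 := mem_unitaryGroup_iff'.mp hU
  have hS : (U * matAbs A * star U).PosSemidef := by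
    simpa [star_eq_conjTranspose] using (posSemidef_matAbs A).mul_mul_conjTranspose_same U
  have hsq : U * matAbs A * star U * (U * matAbs A * star U) =
      (U * A * star U)ᴴ * (U * A * star U) := by
    calc U * matAbs A * star U * (U * matAbs A * star U)
        = U * (matAbs A * (star U * U) * matAbs A) * star U := by noncomm_ring
      _ = U * (Aᴴ * A) * star U := by rw [hUU, Matrix.mul_one, matAbs_mul_self]
      _ = U * (Aᴴ * (star U * U) * A) * star U := by rw [hUU, Matrix.mul_one]
      _ = (U * A * star U)ᴴ * (U * A * star U) := by
        simp only [conjTranspose_mul, star_eq_conjTranspose, conjTranspose_conjTranspose]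
        noncomm_ring
  rw [traceNorm_eq_of_mul_self hS hsq, trace_mul_cycle, hUU, Matrix.one_mul,
    traceNorm_eq_re_trace_matAbs]

lemma traceNorm_smul (r : ℝ) (hr : 0 ≤ r) (A : Matrix ι ι ℂ) :
    traceNorm (r • A) = r * traceNorm A := by
  have hS : (r • matAbs A).PosSemidef := (posSemidef_matAbs A).smul hr
  have hsq : r • matAbs A * (r • matAbs A) = (r • A)ᴴ * (r • A) := by
    rw [conjTranspose_smul, star_trivial, smul_mul_smul_comm, smul_mul_smul_comm,
      matAbs_mul_self]
  rw [traceNorm_eq_of_mul_self hS hsq, trace_smul, traceNorm_eq_re_trace_matAbs]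
  simp

lemma _root_.Matrix.IsHermitian.trace_cfc {A : Matrix ι ι ℂ} (hA : A.IsHermitian) (f : ℝ → ℝ) :
    (cfc f A).trace = ∑ i, (f (hA.eigenvalues i) : ℂ) := by
  rw [hA.cfc_eq, IsHermitian.cfc, Unitary.conjStarAlgAut_apply, trace_mul_cycle,
    Unitary.coe_star_mul_self, Matrix.one_mul, trace_diagonal]
  rfl

lemma traceNorm_eq_sum_abs_eigenvalues {A : Matrix ι ι ℂ} (hA : A.IsHermitian) :
    traceNorm A = ∑ i, |hA.eigenvalues i| := by
  have : IsSelfAdjoint A := hA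
  have hcfc : matAbs A = cfc (fun x : ℝ => |x|) A := by
    rw [matAbs_eq_cfc, hA.eq, ← sq, ← cfc_comp_pow Real.sqrt 2 A]
    exact cfc_congr fun x _ => Real.sqrt_sq_eq_abs x
  rw [traceNorm_eq_re_trace_matAbs, hcfc, hA.trace_cfc, Complex.re_sum]
  simp

lemma sum_norm_sq_row_of_mem_unitaryGroup {N : Matrix ι ι ℂ} (hN : N ∈ unitaryGroup ι ℂ)
    (k : ι) : ∑ i, ‖N k i‖ ^ 2 = 1 := by
  have h : (N * star N) k k = 1 := by rw [Unitary.mul_star_self_of_mem hN, one_apply_eq]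
  simp only [mul_apply, star_apply, ← starRingEnd_apply, Complex.mul_conj'] at h
  exact_mod_cast h

lemma sum_norm_diag_unitary_conj_le {A : Matrix ι ι ℂ} (hA : A.IsHermitian)
    {V : Matrix ι ι ℂ} (hV : V ∈ unitaryGroup ι ℂ) :
    ∑ i, ‖(star V * A * V) i i‖ ≤ traceNorm A := by
  set U : Matrix ι ι ℂ := ↑hA.eigenvectorUnitary
  set N := star U * V
  have hN : N ∈ unitaryGroup ι ℂ := mul_mem (Unitary.star_mem hA.eigenvectorUnitary.2) hV
  have hentry : ∀ i, (star V * A * V) i i = ∑ k, (hA.eigenvalues k : ℂ) * (‖N k i‖ ^ 2 : ℝ) := by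
    intro i
    have hform : star V * A * V = star N * diagonal (RCLike.ofReal ∘ hA.eigenvalues) * N := by
      conv_lhs => rw [hA.spectral_theorem]
      simp only [N, Unitary.conjStarAlgAut_apply, star_mul, star_star]
      noncomm_ring
    rw [hform, mul_apply]
    refine Finset.sum_congr rfl fun k _ => ?_
    rw [mul_diagonal, star_apply, mul_comm (star _), mul_assoc, ← starRingEnd_apply,
      Complex.conj_mul']
    push_cast
    rfl
  calc ∑ i, ‖(star V * A * V) i i‖
      ≤ ∑ i, ∑ k, |hA.eigenvalues k| * ‖N k i‖ ^ 2 := by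
        refine Finset.sum_le_sum fun i _ => ?_
        rw [hentry i]
        refine (norm_sum_le _ _).trans_eq (Finset.sum_congr rfl fun k _ => ?_)
        rw [norm_mul, Complex.norm_real, Complex.norm_real, Real.norm_eq_abs, Real.norm_eq_abs,
          abs_of_nonneg (sq_nonneg ‖N k i‖)]
    _ = ∑ k, |hA.eigenvalues k| * ∑ i, ‖N k i‖ ^ 2 := by
        rw [Finset.sum_comm]
        simp only [Finset.mul_sum]
    _ = traceNorm A := by
        simp only [sum_norm_sq_row_of_mem_unitaryGroup hN, mul_one,
          traceNorm_eq_sum_abs_eigenvalues hA]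

lemma traceNorm_add_le {A B : Matrix ι ι ℂ} (hA : A.IsHermitian) (hB : B.IsHermitian) :
    traceNorm (A + B) ≤ traceNorm A + traceNorm B := by
  have hC : (A + B).IsHermitian := hA.add hB
  set V : Matrix ι ι ℂ := ↑hC.eigenvectorUnitary
  have hV : V ∈ unitaryGroup ι ℂ := hC.eigenvectorUnitary.2
  have hdiag : star V * (A + B) * V = diagonal (RCLike.ofReal ∘ hC.eigenvalues) := by
    simpa [Unitary.conjStarAlgAut_star_apply] using hC.conjStarAlgAut_star_eigenvectorUnitary
  have hC_norm : traceNorm (A + B) = ∑ i, ‖(star V * (A + B) * V) i i‖ := by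
    simp [traceNorm_eq_sum_abs_eigenvalues hC, hdiag, Complex.norm_real]
  calc traceNorm (A + B)
      = ∑ i, ‖(star V * A * V) i i + (star V * B * V) i i‖ := by
        rw [hC_norm, Matrix.mul_add, Matrix.add_mul]
        rfl
    _ ≤ ∑ i, ‖(star V * A * V) i i‖ + ∑ i, ‖(star V * B * V) i i‖ := by
        rw [← Finset.sum_add_distrib]
        exact Finset.sum_le_sum fun i _ => norm_add_le _ _
    _ ≤ traceNorm A + traceNorm B :=
        add_le_add (sum_norm_diag_unitary_conj_le hA hV) (sum_norm_diag_unitary_conj_le hB hV)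

lemma traceNorm_sub_le {A B : Matrix ι ι ℂ} (hA : A.IsHermitian) (hB : B.IsHermitian) :
    traceNorm (A - B) ≤ traceNorm A + traceNorm B := by
  simpa [sub_eq_add_neg, traceNorm_neg] using traceNorm_add_le hA hB.neg

lemma traceNorm_sum_le {α : Type} (s : Finset α) {f : α → Matrix ι ι ℂ}
    (hf : ∀ a ∈ s, (f a).IsHermitian) :
    traceNorm (∑ a ∈ s, f a) ≤ ∑ a ∈ s, traceNorm (f a) := by
  classical
  induction s using Finset.induction_on with
  | empty => simp [traceNorm_zero]
  | insert a s ha ih =>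
    rw [Finset.forall_mem_insert] at hf
    rw [Finset.sum_insert ha, Finset.sum_insert ha]
    exact (traceNorm_add_le hf.1 (isSelfAdjoint_sum s hf.2)).trans (by gcongr; exact ih hf.2)

end TraceNorm

section Phase

def phase (d : ℕ) (x : Fin d) : ℂ := Complex.exp (2 * Real.pi * Complex.I / d) ^ (x : ℕ)

variable {d : ℕ} [NeZero d]

lemma isPrimitiveRoot_exp_two_pi_I_div :
    IsPrimitiveRoot (Complex.exp (2 * Real.pi * Complex.I / d)) d :=
  Complex.isPrimitiveRoot_exp d (NeZero.ne d)

lemma phase_zero : phase d 0 = 1 := by simp [phase]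

lemma phase_add (x y : Fin d) : phase d (x + y) = phase d x * phase d y := by
  rw [phase, phase, phase, Fin.val_add, ← pow_add,
    ← pow_eq_pow_mod _ isPrimitiveRoot_exp_two_pi_I_div.pow_eq_one]

lemma star_phase (x : Fin d) : star (phase d x) = phase d (-x) := by
  have hnorm : ‖phase d x‖ = 1 := by
    rw [phase, norm_pow, isPrimitiveRoot_exp_two_pi_I_div.norm'_eq_one (NeZero.ne d), one_pow]
  rw [← inv_eq_of_mul_eq_one_right (by rw [← phase_add, add_neg_cancel, phase_zero] :
    phase d x * phase d (-x) = 1), Complex.inv_eq_conj hnorm]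
  rfl

lemma sum_phase_mul (c : Fin d) : ∑ q : Fin d, phase d (q * c) = if c = 0 then (d : ℂ) else 0 := by
  set ω := Complex.exp (2 * Real.pi * Complex.I / d)
  have hω : IsPrimitiveRoot ω d := isPrimitiveRoot_exp_two_pi_I_div
  have hterm : ∀ q : Fin d, phase d (q * c) = (ω ^ (c : ℕ)) ^ (q : ℕ) := fun q => by
    rw [phase, Fin.val_mul, ← pow_eq_pow_mod _ hω.pow_eq_one, ← pow_mul, mul_comm]
  rw [Finset.sum_congr rfl fun q _ => hterm q,
    Fin.sum_univ_eq_sum_range (fun j => (ω ^ (c : ℕ)) ^ j)]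
  split_ifs with hc
  · simp [hc]
  · have hne : ω ^ (c : ℕ) ≠ 1 := fun h => hc <| Fin.ext <|
      Nat.eq_zero_of_dvd_of_lt ((hω.pow_eq_one_iff_dvd _).mp h) c.isLt
    rw [geom_sum_eq hne, ← pow_mul, mul_comm, pow_mul, hω.pow_eq_one, one_pow, sub_self, zero_div]

end Phase

section Weyl

variable {d n : ℕ}

lemma update_sub_injective [NeZero d] (i : Fin n) (p : Fin d) :
    Function.Injective fun a : Cfg d n => Function.update a i (a i - p) := by
  intro a b h
  funext j
  have hj := congrFun h j
  by_cases hji : j = i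
  · subst hji
    simpa using hj
  · simpa [Function.update_of_ne hji] using hj

/-- The Weyl operator `Xᵖ Zᵠ` on the `i`-th qudit. -/
def weyl (i : Fin n) (p q : Fin d) : Mat d n :=
  fun a c => if c = Function.update a i (a i - p) then phase d (q * (a i - p)) else 0

lemma star_weyl_apply (i : Fin n) (p q : Fin d) (c b : Cfg d n) :
    star (weyl i p q) c b =
      if c = Function.update b i (b i - p) then star (phase d (q * (b i - p))) else 0 := by
  rw [star_apply, weyl]
  split_ifs <;> simp

lemma weyl_mem_unitaryGroup [NeZero d] (i : Fin n) (p q : Fin d) :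
    weyl i p q ∈ unitaryGroup (Cfg d n) ℂ := by
  rw [mem_unitaryGroup_iff]
  funext a b
  simp_rw [mul_apply, weyl, star_weyl_apply, ite_mul, zero_mul, Finset.sum_ite_eq',
    Finset.mem_univ, if_true, (update_sub_injective i p).eq_iff]
  by_cases hab : a = b
  · rw [if_pos hab, hab, star_phase, ← phase_add, add_neg_cancel, phase_zero, one_apply_eq]
  · rw [if_neg hab, mul_zero, one_apply_ne hab]

lemma weyl_conj_apply (i : Fin n) (p q : Fin d) (X : Mat d n) (a b : Cfg d n) :
    (weyl i p q * X * star (weyl i p q)) a b =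
      phase d (q * (a i - p)) * star (phase d (q * (b i - p))) *
        X (Function.update a i (a i - p)) (Function.update b i (b i - p)) := by
  rw [Matrix.mul_assoc, mul_apply]
  simp_rw [weyl, ite_mul, zero_mul, Finset.sum_ite_eq', Finset.mem_univ, if_true]
  rw [mul_apply]
  simp_rw [star_weyl_apply, mul_ite, mul_zero, Finset.sum_ite_eq', Finset.mem_univ, if_true]
  ring

lemma isHermitian_weyl_conj (i : Fin n) (p q : Fin d) {X : Mat d n} (hX : X.IsHermitian) :
    (weyl i p q * X * star (weyl i p q)).IsHermitian := by
  rw [IsHermitian, conjTranspose_mul, conjTranspose_mul, star_eq_conjTranspose,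
    conjTranspose_conjTranspose, hX.eq, Matrix.mul_assoc]

lemma weyl_zero_zero [NeZero d] (i : Fin n) : (weyl i 0 0 : Mat d n) = 1 := by
  funext a b
  simp only [weyl, sub_zero, Function.update_eq_self, zero_mul, phase_zero, one_apply, eq_comm]

/-- The completely depolarizing channel `X ↦ (1/d) I ⊗ Trᵢ X` on the `i`-th qudit. -/
def depol (i : Fin n) (X : Mat d n) : Mat d n :=
  fun a b => if a i = b i then
    (d : ℂ)⁻¹ * ∑ s, X (Function.update a i s) (Function.update b i s) else 0

/-- Twirling over the Weyl operators depolarizes: the phases average out unless `a i = b i`. -/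
lemma sum_weyl_conj [NeZero d] (i : Fin n) (X : Mat d n) :
    ∑ pq : Fin d × Fin d, weyl i pq.1 pq.2 * X * star (weyl i pq.1 pq.2) =
      ((d : ℂ) ^ 2) • depol i X := by
  funext a b
  rw [Fintype.sum_prod_type, Matrix.smul_apply, Matrix.sum_apply]
  simp_rw [Matrix.sum_apply, weyl_conj_apply, ← Finset.sum_mul]
  have hphase : ∀ p q : Fin d, phase d (q * (a i - p)) * star (phase d (q * (b i - p))) =
      phase d (q * (a i - b i)) := fun p q => by
    rw [star_phase, ← phase_add]
    congr 1
    open Fin.CommRing in ring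
  simp_rw [hphase, sum_phase_mul, sub_eq_zero, depol]
  by_cases hab : a i = b i
  · have hshift : ∑ p, X (Function.update a i (a i - p)) (Function.update b i (a i - p)) =
        ∑ s, X (Function.update a i s) (Function.update b i s) :=
      Fintype.sum_equiv (Equiv.subLeft (a i)) _ _ fun _ => rfl
    simp only [← hab, if_true, smul_eq_mul, ← Finset.mul_sum, hshift]
    field_simp [NeZero.ne d]
  · simp [hab]

end Weyl

section Depolarizing

variable {d n : ℕ} [NeZero d]

lemma depol_eq_average (i : Fin n) (X : Mat d n) :
    depol i X = ((d : ℝ) ^ 2)⁻¹ •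
      ∑ pq : Fin d × Fin d, weyl i pq.1 pq.2 * X * star (weyl i pq.1 pq.2) := by
  rw [sum_weyl_conj, ← Complex.coe_smul, smul_smul]
  push_cast
  rw [inv_mul_cancel₀ (by simp [NeZero.ne d]), one_smul]

lemma isHermitian_depol (i : Fin n) {X : Mat d n} (hX : X.IsHermitian) :
    (depol i X).IsHermitian := by
  rw [depol_eq_average]
  exact (IsSelfAdjoint.all _).smul
    (isSelfAdjoint_sum _ fun pq _ => isHermitian_weyl_conj i pq.1 pq.2 hX)

lemma traceNorm_depol_le (i : Fin n) {X : Mat d n} (hX : X.IsHermitian) :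
    traceNorm (depol i X) ≤ traceNorm X := by
  rw [depol_eq_average, traceNorm_smul _ (by positivity)]
  calc ((d : ℝ) ^ 2)⁻¹ *
        traceNorm (∑ pq : Fin d × Fin d, weyl i pq.1 pq.2 * X * star (weyl i pq.1 pq.2))
      ≤ ((d : ℝ) ^ 2)⁻¹ * ∑ _pq : Fin d × Fin d, traceNorm X := by
        gcongr
        refine (traceNorm_sum_le _ fun pq _ => isHermitian_weyl_conj i pq.1 pq.2 hX).trans_eq ?_
        exact Finset.sum_congr rfl fun pq _ => traceNorm_unitary_conj X (weyl_mem_unitaryGroup ..)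
    _ = traceNorm X := by
        simp only [Finset.sum_const, Finset.card_univ, Fintype.card_prod, Fintype.card_fin,
          nsmul_eq_mul]
        push_cast
        field_simp [NeZero.ne d]

lemma sub_depol_eq_average (i : Fin n) (X : Mat d n) :
    X - depol i X = ((d : ℝ) ^ 2)⁻¹ •
      ∑ pq : Fin d × Fin d, (X - weyl i pq.1 pq.2 * X * star (weyl i pq.1 pq.2)) := by
  rw [depol_eq_average, Finset.sum_sub_distrib, smul_sub, Finset.sum_const, Finset.card_univ,
    Fintype.card_prod, Fintype.card_fin, ← Nat.cast_smul_eq_nsmul ℝ, smul_smul]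
  push_cast
  rw [← sq, inv_mul_cancel₀ (by simp [NeZero.ne d]), one_smul]

/-- The identity term of the twirl cancels, leaving `d² - 1` terms of trace norm `≤ 2 ‖X‖₁`. -/
lemma traceNorm_sub_depol_le (i : Fin n) {X : Mat d n} (hX : X.IsHermitian) :
    traceNorm (X - depol i X) ≤ 2 * (((d : ℝ) ^ 2 - 1) / (d : ℝ) ^ 2) * traceNorm X := by
  set t : Fin d × Fin d → ℝ :=
    fun pq => traceNorm (X - weyl i pq.1 pq.2 * X * star (weyl i pq.1 pq.2))
  have ht_zero : t 0 = 0 := by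
    simp [t, weyl_zero_zero, traceNorm_zero]
  have ht_le : ∀ pq, t pq ≤ 2 * traceNorm X := fun pq =>
    (traceNorm_sub_le hX (isHermitian_weyl_conj i pq.1 pq.2 hX)).trans_eq <| by
      rw [traceNorm_unitary_conj X (weyl_mem_unitaryGroup ..), two_mul]
  have hcard : ((Finset.univ.erase (0 : Fin d × Fin d)).card : ℝ) = (d : ℝ) ^ 2 - 1 := by
    rw [Finset.card_erase_of_mem (Finset.mem_univ _), Finset.card_univ, Fintype.card_prod,
      Fintype.card_fin, Nat.cast_pred (Nat.mul_pos (NeZero.pos d) (NeZero.pos d))]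
    push_cast
    ring
  rw [sub_depol_eq_average, traceNorm_smul _ (by positivity)]
  calc ((d : ℝ) ^ 2)⁻¹ *
        traceNorm (∑ pq : Fin d × Fin d, (X - weyl i pq.1 pq.2 * X * star (weyl i pq.1 pq.2)))
      ≤ ((d : ℝ) ^ 2)⁻¹ * ∑ pq ∈ Finset.univ.erase 0, t pq := by
        rw [Finset.sum_erase _ ht_zero]
        gcongr
        exact traceNorm_sum_le _ fun pq _ => hX.sub (isHermitian_weyl_conj i pq.1 pq.2 hX)
    _ ≤ ((d : ℝ) ^ 2)⁻¹ * (((d : ℝ) ^ 2 - 1) * (2 * traceNorm X)) := by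
        gcongr
        rw [← hcard, ← nsmul_eq_mul]
        exact Finset.sum_le_card_nsmul _ _ _ fun pq _ => ht_le pq
    _ = 2 * (((d : ℝ) ^ 2 - 1) / (d : ℝ) ^ 2) * traceNorm X := by ring

end Depolarizing

section PartialTrace

variable {d n : ℕ}

lemma ptrace_sub (i : Fin n) (X Y : Mat d n) : ptrace i (X - Y) = ptrace i X - ptrace i Y := by
  funext a b
  simp [ptrace, Finset.sum_sub_distrib]

lemma ptrace_zero (i : Fin n) : ptrace i (0 : Mat d n) = 0 := by
  funext a b
  simp [ptrace]

lemma ptraceSet_sub (I : Finset (Fin n)) (X Y : Mat d n) :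
    ptraceSet I (X - Y) = ptraceSet I X - ptraceSet I Y := by
  funext a b
  simp [ptraceSet, Finset.sum_sub_distrib]

lemma update_ins (i : Fin n) (a : {j : Fin n // j ≠ i} → Fin d) (s t : Fin d) :
    Function.update (ins i a s) i t = ins i a t := by
  funext j
  by_cases hj : j = i
  · subst hj
    simp [ins]
  · simp [ins, hj]

lemma ptrace_depol [NeZero d] (i : Fin n) (X : Mat d n) : ptrace i (depol i X) = ptrace i X := by
  funext a b
  have hterm : ∀ s, depol i X (ins i a s) (ins i b s) = (d : ℂ)⁻¹ * ptrace i X a b := fun s => by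
    simp only [depol, ins, dite_true, if_true, update_ins]
    rfl
  simp only [ptrace, hterm, Finset.sum_const, Finset.card_univ, Fintype.card_fin, nsmul_eq_mul]
  field_simp [NeZero.ne d]

lemma ptrace_sub_depol [NeZero d] (i : Fin n) (X : Mat d n) : ptrace i (X - depol i X) = 0 := by
  rw [ptrace_sub, ptrace_depol, sub_self]

end PartialTrace

section DepolarizingOn

variable {d n : ℕ}

/-- The completely depolarizing channel `X ↦ d^{-|J|} I_J ⊗ Tr_J X` on the qudits in `J`. -/
def depolOn (J : Finset (Fin n)) (X : Mat d n) : Mat d n := fun a b =>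
  if ∀ j ∈ J, a j = b j then
    ((d : ℂ) ^ J.card)⁻¹ *
      ∑ s : ({j : Fin n // j ∈ J} → Fin d),
        X (insSet J (fun j => a j) s) (insSet J (fun j => b j) s)
  else 0

lemma depolOn_empty (X : Mat d n) : depolOn ∅ X = X := by
  funext a b
  have hins : ∀ (c : Cfg d n) s, insSet (∅ : Finset (Fin n)) (fun j => c j) s = c := fun c s => by
    funext j
    simp [insSet]
  simp [depolOn, hins]

lemma depolOn_eq_zero_of_ptraceSet_eq_zero {I : Finset (Fin n)} {X : Mat d n}
    (hI : ptraceSet I X = 0) : depolOn I X = 0 := by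
  funext a b
  have hsum := congrFun (congrFun hI fun j => a j) fun j => b j
  simp only [ptraceSet] at hsum
  simp [depolOn, hsum]

def insertCfgEquiv {i : Fin n} {J : Finset (Fin n)} (hiJ : i ∉ J) :
    Fin d × ({j : Fin n // j ∈ J} → Fin d) ≃ ({j : Fin n // j ∈ insert i J} → Fin d) where
  toFun st j := if h : j.1 = i then st.1 else st.2 ⟨j.1, (Finset.mem_insert.mp j.2).resolve_left h⟩
  invFun f := (f ⟨i, Finset.mem_insert_self i J⟩, fun j => f ⟨j.1, Finset.mem_insert_of_mem j.2⟩)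
  left_inv st := by
    ext j
    · simp
    · simp [show j.1 ≠ i from fun h => hiJ (h ▸ j.2)]
  right_inv f := by
    funext j
    by_cases h : j.1 = i
    · simp only [dif_pos h]
      exact congrArg f (Subtype.ext h.symm)
    · simp [dif_neg h]

lemma insSet_insertCfgEquiv {i : Fin n} {J : Finset (Fin n)} (hiJ : i ∉ J) (a : Cfg d n)
    (s : Fin d) (t : {j : Fin n // j ∈ J} → Fin d) :
    insSet (insert i J) (fun j => a j) (insertCfgEquiv hiJ (s, t)) =
      insSet J (fun j => Function.update a i s j) t := by
  funext j
  by_cases hji : j = i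
  · subst hji
    simp [insSet, insertCfgEquiv, hiJ]
  · by_cases hjJ : j ∈ J <;> simp [insSet, insertCfgEquiv, hji, hjJ]

lemma depol_depolOn [NeZero d] {i : Fin n} {J : Finset (Fin n)} (hiJ : i ∉ J) (X : Mat d n) :
    depol i (depolOn J X) = depolOn (insert i J) X := by
  funext a b
  have hupdate : ∀ s, (∀ j ∈ J, Function.update a i s j = Function.update b i s j) ↔
      ∀ j ∈ J, a j = b j := fun s => by
    refine forall₂_congr fun j hj => ?_
    rw [Function.update_of_ne (ne_of_mem_of_not_mem hj hiJ),
      Function.update_of_ne (ne_of_mem_of_not_mem hj hiJ)]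
  have hsplit : ∑ u : ({j : Fin n // j ∈ insert i J} → Fin d),
      X (insSet (insert i J) (fun j => a j) u) (insSet (insert i J) (fun j => b j) u) =
      ∑ s : Fin d, ∑ t : ({j : Fin n // j ∈ J} → Fin d),
        X (insSet J (fun j => Function.update a i s j) t)
          (insSet J (fun j => Function.update b i s j) t) := by
    rw [← (insertCfgEquiv hiJ).sum_comp, Fintype.sum_prod_type]
    simp only [insSet_insertCfgEquiv]
  simp only [depol, depolOn, hupdate, Finset.forall_mem_insert, hsplit,
    Finset.card_insert_of_notMem hiJ]
  by_cases hi : a i = b i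
  · by_cases hJ : ∀ j ∈ J, a j = b j
    · simp only [if_pos hi, if_pos hJ, if_pos (And.intro hi hJ)]
      rw [← Finset.mul_sum, ← mul_assoc, pow_succ, mul_inv, mul_comm (d : ℂ)⁻¹]
    · simp [hJ]
  · simp [hi]

lemma isHermitian_depolOn [NeZero d] (J : Finset (Fin n)) {X : Mat d n} (hX : X.IsHermitian) :
    (depolOn J X).IsHermitian := by
  induction J using Finset.induction_on with
  | empty => rwa [depolOn_empty]
  | insert i J hiJ ih => rw [← depol_depolOn hiJ]; exact isHermitian_depol i ih

lemma traceNorm_depolOn_le [NeZero d] (J : Finset (Fin n)) {X : Mat d n} (hX : X.IsHermitian) :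
    traceNorm (depolOn J X) ≤ traceNorm X := by
  induction J using Finset.induction_on with
  | empty => rw [depolOn_empty]
  | insert i J hiJ ih =>
    rw [← depol_depolOn hiJ]
    exact (traceNorm_depol_le i (isHermitian_depolOn J hX)).trans ih

end DepolarizingOn

lemma sum_filter_lt_sub_filter_le {α G : Type} [LinearOrder α] [AddCommGroup G]
    (f : Finset α → G) (I : Finset α) :
    ∑ i ∈ I, (f (I.filter (· < i)) - f (I.filter (· ≤ i))) = f ∅ - f I := by
  induction I using Finset.induction_on_max with
  | empty => simp
  | insert M s hs ih =>
    have hMs : M ∉ s := fun h => lt_irrefl M (hs M h)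
    have hlt : (insert M s).filter (· < M) = s := by
      rw [Finset.filter_insert, if_neg (lt_irrefl M), Finset.filter_true_of_mem hs]
    have hle : (insert M s).filter (· ≤ M) = insert M s :=
      Finset.filter_true_of_mem fun x hx =>
        (Finset.mem_insert.mp hx).elim le_of_eq fun h => (hs x h).le
    have hrest : ∀ i ∈ s, (insert M s).filter (· < i) = s.filter (· < i) ∧
        (insert M s).filter (· ≤ i) = s.filter (· ≤ i) := fun i hi => by
      simp [Finset.filter_insert, not_lt_of_gt (hs i hi), not_le_of_gt (hs i hi)]
    rw [Finset.sum_insert hMs, hlt, hle,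
      Finset.sum_congr rfl fun i hi => by rw [(hrest i hi).1, (hrest i hi).2], ih]
    abel

lemma filter_le_eq_insert_filter_lt {α : Type} [LinearOrder α] {I : Finset α} {i : α}
    (hi : i ∈ I) : I.filter (· ≤ i) = insert i (I.filter (· < i)) := by
  ext x
  simp only [Finset.mem_filter, Finset.mem_insert, le_iff_lt_or_eq]
  grind

section W1

variable {d n : ℕ}

lemma W1_le_of_decomposition {X : Mat d n} (Y : Fin n → Mat d n) (hY : ∀ i, (Y i).IsHermitian)
    (hYtr : ∀ i, ptrace i (Y i) = 0) (hXY : X = ∑ i, Y i) :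
    W1 X ≤ (1 / 2) * ∑ i, traceNorm (Y i) := by
  refine csInf_le ⟨0, ?_⟩ ⟨Y, hY, hYtr, hXY, rfl⟩
  rintro r ⟨Z, -, -, -, rfl⟩
  have := Finset.sum_nonneg fun i (_ : i ∈ Finset.univ) => traceNorm_nonneg (Z i)
  positivity

lemma W1_le_card_mul_traceNorm [NeZero d] (I : Finset (Fin n)) {X : Mat d n}
    (hX : X.IsHermitian) (hI : ptraceSet I X = 0) :
    W1 X ≤ (I.card : ℝ) * (((d : ℝ) ^ 2 - 1) / (d : ℝ) ^ 2) * traceNorm X := by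
  set P : Fin n → Mat d n := fun i => depolOn (I.filter (· < i)) X
  set Y : Fin n → Mat d n := fun i => if i ∈ I then P i - depol i (P i) else 0
  have hP : ∀ i, (P i).IsHermitian := fun i => isHermitian_depolOn _ hX
  have hY : ∀ i, (Y i).IsHermitian := fun i => by
    by_cases hi : i ∈ I
    · simpa [Y, hi] using (hP i).sub (isHermitian_depol i (hP i))
    · simp [Y, hi]
  have hYtr : ∀ i, ptrace i (Y i) = 0 := fun i => by
    by_cases hi : i ∈ I
    · simpa [Y, hi] using ptrace_sub_depol i (P i)
    · simpa [Y, hi] using ptrace_zero i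
  have hXY : X = ∑ i, Y i := by
    have hstep : ∀ i ∈ I, P i - depol i (P i) =
        depolOn (I.filter (· < i)) X - depolOn (I.filter (· ≤ i)) X := fun i hi => by
      rw [filter_le_eq_insert_filter_lt hi, ← depol_depolOn (by simp)]
    rw [Finset.sum_ite_mem, Finset.univ_inter, Finset.sum_congr rfl hstep,
      sum_filter_lt_sub_filter_le (fun J => depolOn J X), depolOn_empty,
      depolOn_eq_zero_of_ptraceSet_eq_zero hI, sub_zero]
  have hYnorm : ∀ i, traceNorm (Y i) ≤ if i ∈ I then
      2 * (((d : ℝ) ^ 2 - 1) / (d : ℝ) ^ 2) * traceNorm X else 0 := fun i => by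
    by_cases hi : i ∈ I
    · simp only [Y, if_pos hi]
      refine (traceNorm_sub_depol_le i (hP i)).trans ?_
      have hd : (1 : ℝ) ≤ (d : ℝ) ^ 2 := one_le_pow₀ (by exact_mod_cast NeZero.one_le)
      gcongr
      exact traceNorm_depolOn_le _ hX
    · simp [Y, hi, traceNorm_zero]
  refine (W1_le_of_decomposition Y hY hYtr hXY).trans ?_
  calc (1 / 2) * ∑ i, traceNorm (Y i)
      ≤ (1 / 2) * ∑ i, (if i ∈ I then
          2 * (((d : ℝ) ^ 2 - 1) / (d : ℝ) ^ 2) * traceNorm X else 0) := by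
        gcongr with i
        exact hYnorm i
    _ = (I.card : ℝ) * (((d : ℝ) ^ 2 - 1) / (d : ℝ) ^ 2) * traceNorm X := by
        rw [Finset.sum_ite_mem, Finset.univ_inter, Finset.sum_const, nsmul_eq_mul]
        ring

end W1

theorem stmt4_general {d n : ℕ} (hd : 2 ≤ d) (I : Finset (Fin n))
    (X : Mat d n) (hX : X.IsHermitian)
    (hI : ptraceSet I X = 0) :
    W1 X ≤ (I.card : ℝ) * (((d : ℝ) ^ 2 - 1) / (d : ℝ) ^ 2) * traceNorm X ∧
    ∀ ρ σ : Mat d n, IsState ρ → IsState σ → ptraceSet I ρ = ptraceSet I σ →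
      W1 (ρ - σ) ≤ (I.card : ℝ) * (((d : ℝ) ^ 2 - 1) / (d : ℝ) ^ 2) * traceNorm (ρ - σ) := by
  have : NeZero d := ⟨by omega⟩
  refine ⟨W1_le_card_mul_traceNorm I hX hI, fun ρ σ hρ hσ hρσ => ?_⟩
  exact W1_le_card_mul_traceNorm I (hρ.1.1.sub hσ.1.1) (by rw [ptraceSet_sub, hρσ, sub_self])

theorem stmt4 {d n : ℕ} (hd : 2 ≤ d) (hn : 1 ≤ n) (I : Finset (Fin n))
    (X : Mat d n) (hX : X.IsHermitian) (hXtr : X.trace = 0)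
    (hI : ptraceSet I X = 0) :
    W1 X ≤ (I.card : ℝ) * (((d : ℝ) ^ 2 - 1) / (d : ℝ) ^ 2) * traceNorm X ∧
    ∀ ρ σ : Mat d n, IsState ρ → IsState σ → ptraceSet I ρ = ptraceSet I σ →
      W1 (ρ - σ) ≤ (I.card : ℝ) * (((d : ℝ) ^ 2 - 1) / (d : ℝ) ^ 2) * traceNorm (ρ - σ) :=
  stmt4_general hd I X hX hI

end QW1
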